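/- Let λ be a Young diagram with exactly k nonempty rows of lengths λ_1 ≤ λ_2 ≤ ... ≤ λ_k (from top), and set n_i = λ_i + (i-1), so n_1 < n_2 < ... < n_k are the hook lengths of the cells in the first column. Then the product of the hook lengths of all cells of λ equals (∏_{i=1}^k n_i!) / ∏_{1≤i<j≤k}(n_j - n_i). -/

import Mathlib

/-!
Fix a row `i` and put `nᵢ = λᵢ + i`. The hook lengths of the cells of row `i` together with
the differences `nᵢ - nᵢ'` for the rows `i'` above it are exactly the numbers `1, …, nᵢ`, each
once: the hooks decrease strictly along the row, and a hook length is never `nᵢ - nᵢ'`, since it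
is smaller or larger according as row `i'` stops before or reaches past its column. Hence each
row contributes `nᵢ! / ∏_{i' < i} (nᵢ - nᵢ')` to the product of all hook lengths.
-/

open Finset

/-- For a Young diagram with rows (from top) of lengths `λ 0 ≤ λ 1 ≤ ⋯ ≤ λ (k-1)` (all
nonempty), the hook length of the cell in row `i`, column `j` (`0 ≤ j < λ i`): the cell
itself, the `λ i - 1 - j` cells to its right, and the cells above it in its column. -/
def hookLen (k : ℕ) (lam : Fin k → ℕ) (i : Fin k) (j : ℕ) : ℕ :=
  (lam i - j) + (Finset.univ.filter (fun i' : Fin k => i' < i ∧ j < lam i')).card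

open scoped Nat

theorem Finset.prod_id_mul_prod_id_eq_factorial {A B : Finset ℕ} {n : ℕ} (hAB : Disjoint A B)
    (hsub : A ∪ B ⊆ Ico 1 (n + 1)) (hcard : #A + #B = n) :
    (∏ a ∈ A, a) * ∏ b ∈ B, b = n ! := by
  have hunion : A ∪ B = Ico 1 (n + 1) :=
    eq_of_subset_of_card_le hsub (by simp [card_union_of_disjoint hAB, hcard])
  rw [← prod_union hAB, hunion, prod_Ico_id_eq_factorial]

section HookLength

variable {k : ℕ} {lam : Fin k → ℕ}

-- Rows are indexed from `0`, so this is the paper's `nᵢ = λᵢ + (i - 1)`.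
def firstColumnHook (lam : Fin k → ℕ) (i : Fin k) : ℕ := lam i + i

theorem firstColumnHook_strictMono (hmono : Monotone lam) : StrictMono (firstColumnHook lam) :=
  fun i i' h => by
    have : lam i ≤ lam i' := hmono h.le
    have : (i : ℕ) < i' := h
    unfold firstColumnHook; omega

theorem card_filter_lt_and_lt_le (i : Fin k) (j : ℕ) :
    #(univ.filter fun i' : Fin k => i' < i ∧ j < lam i') ≤ i := by
  calc #(univ.filter fun i' : Fin k => i' < i ∧ j < lam i')
      ≤ #(Iio i) := card_le_card fun m hm => by simp_all
    _ = i := Fin.card_Iio i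

theorem hookLen_pos {i : Fin k} {j : ℕ} (hj : j < lam i) : 0 < hookLen k lam i j := by
  unfold hookLen; omega

theorem hookLen_le_firstColumnHook (i : Fin k) (j : ℕ) :
    hookLen k lam i j ≤ firstColumnHook lam i := by
  have := card_filter_lt_and_lt_le (lam := lam) i j
  unfold hookLen firstColumnHook; omega

theorem hookLen_strictAntiOn (i : Fin k) : StrictAntiOn (hookLen k lam i) (Set.Iio (lam i)) := by
  intro j₁ _ j₂ hj₂ h
  have : #(univ.filter fun i' : Fin k => i' < i ∧ j₂ < lam i') ≤
      #(univ.filter fun i' : Fin k => i' < i ∧ j₁ < lam i') :=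
    card_le_card fun m hm => by simp only [mem_filter, mem_univ, true_and] at hm ⊢; omega
  simp only [Set.mem_Iio] at hj₂
  unfold hookLen; omega

theorem hookLen_lt_sub_of_le (hmono : Monotone lam) {i i' : Fin k} (hi' : i' < i) {j : ℕ}
    (h : lam i' ≤ j) : hookLen k lam i j < firstColumnHook lam i - firstColumnHook lam i' := by
  have hcard : #(univ.filter fun m : Fin k => m < i ∧ j < lam m) ≤ #(Ioo i' i) :=
    card_le_card fun m hm => by
      simp only [mem_filter, mem_univ, true_and, mem_Ioo] at hm ⊢
      exact ⟨lt_of_not_ge fun hm' => (hm.2.trans_le (hmono hm')).not_ge h, hm.1⟩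
  rw [Fin.card_Ioo] at hcard
  have : (i' : ℕ) < i := hi'
  have : lam i' ≤ lam i := hmono hi'.le
  unfold hookLen firstColumnHook; omega

theorem sub_lt_hookLen_of_lt (hmono : Monotone lam) {i i' : Fin k} (hi' : i' < i) {j : ℕ}
    (h : j < lam i') : firstColumnHook lam i - firstColumnHook lam i' < hookLen k lam i j := by
  have hcard : #(Ico i' i) ≤ #(univ.filter fun m : Fin k => m < i ∧ j < lam m) :=
    card_le_card fun m hm => by
      simp only [mem_filter, mem_univ, true_and, mem_Ico] at hm ⊢
      exact ⟨hm.2, h.trans_le (hmono hm.1)⟩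
  rw [Fin.card_Ico] at hcard
  have : lam i' ≤ lam i := hmono hi'.le
  unfold hookLen firstColumnHook; omega

theorem hookLen_ne_sub (hmono : Monotone lam) {i i' : Fin k} (hi' : i' < i) (j : ℕ) :
    hookLen k lam i j ≠ firstColumnHook lam i - firstColumnHook lam i' := by
  rcases le_or_gt (lam i') j with h | h
  · exact (hookLen_lt_sub_of_le hmono hi' h).ne
  · exact (sub_lt_hookLen_of_lt hmono hi' h).ne'

theorem prod_hookLen_mul_prod_sub (hmono : Monotone lam) (i : Fin k) :
    (∏ j ∈ range (lam i), hookLen k lam i j) *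
        ∏ i' ∈ Iio i, (firstColumnHook lam i - firstColumnHook lam i') =
      (firstColumnHook lam i)! := by
  set n := firstColumnHook lam
  have hn : StrictMono n := firstColumnHook_strictMono hmono
  have hinjA : Set.InjOn (hookLen k lam i) (range (lam i)) := by
    simpa [Set.InjOn] using (hookLen_strictAntiOn (lam := lam) i).injOn
  have hinjB : Set.InjOn (fun i' => n i - n i') (Iio i) := fun x hx y hy hxy => by
    have := hn (mem_Iio.mp hx); have := hn (mem_Iio.mp hy)
    exact hn.injective (by simp only at hxy; omega)
  have := prod_id_mul_prod_id_eq_factorial (A := (range (lam i)).image (hookLen k lam i))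
    (B := (Iio i).image fun i' => n i - n i') (n := n i) ?_ ?_ ?_
  · rwa [prod_image hinjA, prod_image hinjB] at this
  · simp only [disjoint_left, mem_image, mem_range, mem_Iio, not_exists, not_and]
    rintro _ ⟨j, -, rfl⟩ i' hi'
    exact (hookLen_ne_sub hmono hi' j).symm
  · intro a ha
    simp only [mem_union, mem_image, mem_range, mem_Iio, mem_Ico] at ha ⊢
    rcases ha with ⟨j, hj, rfl⟩ | ⟨i', hi', rfl⟩
    · exact ⟨hookLen_pos hj, Nat.lt_succ_of_le (hookLen_le_firstColumnHook i j)⟩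
    · have := hn hi'; omega
  · rw [card_image_of_injOn hinjA, card_image_of_injOn hinjB, card_range, Fin.card_Iio]; rfl

end HookLength

theorem Finset.prod_filter_fst_lt_snd {ι M : Type*} [Fintype ι] [Preorder ι]
    [LocallyFiniteOrderBot ι] [DecidableLT ι] [CommMonoid M] (g : ι → ι → M) :
    ∏ p ∈ univ.filter (fun p : ι × ι => p.1 < p.2), g p.1 p.2 = ∏ i, ∏ i' ∈ Iio i, g i' i := by
  rw [prod_filter, Fintype.prod_prod_type, prod_comm]
  refine prod_congr rfl fun i _ => ?_
  rw [← prod_filter]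
  congr 1
  ext; simp

theorem stmt_9_general (k : ℕ) (lam : Fin k → ℕ) (hmono : Monotone lam) :
    (∏ i : Fin k, ∏ j ∈ Finset.range (lam i), (hookLen k lam i j : ℚ)) =
      (∏ i : Fin k, ((lam i + (i : ℕ)).factorial : ℚ)) /
        ∏ p ∈ Finset.univ.filter (fun p : Fin k × Fin k => p.1 < p.2),
          (((lam p.2 + (p.2 : ℕ)) : ℚ) - ((lam p.1 + (p.1 : ℕ)) : ℚ)) := by
  have hn := firstColumnHook_strictMono hmono
  rw [prod_filter_fst_lt_snd (fun i' i => ((lam i + (i : ℕ)) : ℚ) - ((lam i' + (i' : ℕ)) : ℚ)),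
    ← prod_div_distrib]
  refine prod_congr rfl fun i _ => ?_
  have hsub (i' : Fin k) (hi' : i' ∈ Iio i) :
      (((firstColumnHook lam i - firstColumnHook lam i' : ℕ)) : ℚ) =
        ((lam i + (i : ℕ)) : ℚ) - ((lam i' + (i' : ℕ)) : ℚ) := by
    rw [Nat.cast_sub (hn (mem_Iio.mp hi')).le]; simp [firstColumnHook]
  rw [eq_div_iff, ← prod_congr rfl hsub]
  · exact_mod_cast prod_hookLen_mul_prod_sub hmono i
  · refine prod_ne_zero_iff.mpr fun i' hi' => ?_
    rw [← hsub i' hi', Nat.cast_ne_zero]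
    exact (Nat.sub_pos_of_lt (hn (mem_Iio.mp hi'))).ne'

/-- With `nᵢ = λᵢ + (i-1)` the first-column hook lengths, the product of all hook lengths
of the diagram equals `(∏ nᵢ!) / ∏_{i<j} (n_j - n_i)`. -/
theorem stmt_9 (k : ℕ) (hk : 0 < k) (lam : Fin k → ℕ) (hmono : Monotone lam)
    (hpos : ∀ i, 0 < lam i) :
    (∏ i : Fin k, ∏ j ∈ Finset.range (lam i), (hookLen k lam i j : ℚ)) =
      (∏ i : Fin k, ((lam i + (i : ℕ)).factorial : ℚ)) /
        ∏ p ∈ Finset.univ.filter (fun p : Fin k × Fin k => p.1 < p.2),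
          (((lam p.2 + (p.2 : ℕ)) : ℚ) - ((lam p.1 + (p.1 : ℕ)) : ℚ)) :=
  stmt_9_general k lam hmono
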